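/- Under the stated assumptions, for every \lambda > 0 one has \lambda \, P( \max_{m \le n \le N} J^{(m,n)} > \lambda ) \le E[ ( |J^{(m,N)}| + D ) \mathbf{1}_A ], where A = \{ \max_{m \le n \le N} J^{(m,n)} > \lambda \} and D = ( \sum_{j=m}^{N-1} j^{-(c\rho + \alpha - \eta)} + d\, m^{\beta} / m^{\alpha - \eta} ) \cdot \sup_{m \le j \le N} c_j. -/

import Mathlib

open MeasureTheory Filter Finset

/-!
Let `τ` be the first `n ≥ m` with `J^{(m,n)} > λ` and `E k = {τ ≤ k}`, so that `A = E N` and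
`E k` is `ℱ k`-measurable. On `A`, `λ < J^{(m,τ)} = J^{(m,N)} - ∑_j 1_{E j} a_j ω_j`; integrating,
`λ P(A) ≤ E[J^{(m,N)} 1_A] - ∑_j E[1_{E j} a_j ω_j]`. Split `E j = E k_j ∪ (E j \ E k_j)` with
`k_j = ⌊j - c log j⌋`. On `E k_j` the factor `1_{E k_j} b_j` is `ℱ k_j`-measurable, so conditioning
on `ℱ k_j` gains `e^{-ρ(j - k_j)} ≤ j^{-cρ}`: this gives the first part of `D`. A point of
`E j \ E k_j` has `j - c log j < τ ≤ j`, so at most `d τ^β` indices contribute there, each by at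
most `sup c_j · τ^{η-α}`: this gives the second part.
-/

theorem finite_setOf_sub_mul_log_le (c t : ℝ) :
    {j : ℕ | (j : ℝ) - c * Real.log j ≤ t}.Finite := by
  have hequiv : Asymptotics.IsEquivalent atTop id fun x : ℝ => x - c * Real.log x := by
    refine (((Real.isLittleO_log_id_atTop.const_mul_left c).neg_left.add_isEquivalent
      Asymptotics.IsEquivalent.refl).congr_left ?_).symm
    exact Eventually.of_forall fun x => by simp [sub_eq_neg_add]
  have htends : Tendsto (fun j : ℕ => (j : ℝ) - c * Real.log j) atTop atTop :=
    (hequiv.tendsto_atTop tendsto_id).comp tendsto_natCast_atTop_atTop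
  simpa [← Nat.cofinite_eq_atTop, eventually_cofinite] using htends.eventually_gt_atTop t

theorem rpow_div_rpow_le_of_le {x y β γ : ℝ} (hx : 0 < x) (hxy : x ≤ y) (hβγ : β ≤ γ) :
    y ^ β / y ^ γ ≤ x ^ β / x ^ γ := by
  rw [← Real.rpow_sub (hx.trans_le hxy), ← Real.rpow_sub hx]
  exact Real.rpow_le_rpow_of_nonpos hx hxy (sub_nonpos.2 hβγ)

theorem exp_neg_mul_le_one_div_rpow {ρ c x y : ℝ} (hρ : 0 ≤ ρ) (hx : 0 < x)
    (h : c * Real.log x ≤ y) : Real.exp (-ρ * y) ≤ 1 / x ^ (c * ρ) := by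
  rw [Real.rpow_def_of_pos hx, one_div, ← Real.exp_neg, Real.exp_le_exp]
  nlinarith

theorem abs_mul_div_le {b w B a : ℝ} (hb : |b| ≤ B) (hw : |w| ≤ 1) (ha : 0 ≤ a) :
    |b * w / a| ≤ B / a := by
  rw [abs_div, abs_mul, abs_of_nonneg ha]
  gcongr
  nlinarith [abs_nonneg b, abs_nonneg w]

theorem abs_mul_div_rpow_le {b w B x α η : ℝ} (hb : |b| ≤ B * x ^ η) (hw : |w| ≤ 1)
    (hx : 0 < x) : |b * w / x ^ α| ≤ B / x ^ (α - η) := by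
  rw [Real.rpow_sub hx, div_div_eq_mul_div]
  exact abs_mul_div_le hb hw (Real.rpow_nonneg hx.le α)

theorem sum_le_of_forall_mem_window {c d β γ B : ℝ} {m τ : ℕ} {s : Finset ℕ} {f : ℕ → ℝ}
    (hm : 0 < m) (hmτ : m ≤ τ) (hβγ : β ≤ γ) (hd : 0 ≤ d) (hB : 0 ≤ B)
    (hs : ∀ j ∈ s, τ ≤ j ∧ (j : ℝ) - c * Real.log j ≤ τ) (hf : ∀ j ∈ s, f j ≤ B / (τ : ℝ) ^ γ)
    (hcard : (({j : ℕ | τ ≤ j ∧ (j : ℝ) - c * Real.log j ≤ τ}.ncard : ℝ)) ≤ d * (τ : ℝ) ^ β) :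
    ∑ j ∈ s, f j ≤ d * (m : ℝ) ^ β / (m : ℝ) ^ γ * B := by
  have hcard_s : (#s : ℝ) ≤ d * (τ : ℝ) ^ β := by
    refine le_trans ?_ hcard
    rw [← Set.ncard_coe_finset]
    exact_mod_cast Set.ncard_le_ncard (fun j hj => hs j hj)
      ((finite_setOf_sub_mul_log_le c τ).subset fun j hj => hj.2)
  calc ∑ j ∈ s, f j ≤ #s * (B / (τ : ℝ) ^ γ) := by
        rw [← nsmul_eq_mul]
        exact sum_le_card_nsmul _ _ _ hf
    _ ≤ d * (τ : ℝ) ^ β * (B / (τ : ℝ) ^ γ) := by gcongr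
    _ = d * ((τ : ℝ) ^ β / (τ : ℝ) ^ γ) * B := by ring
    _ ≤ d * ((m : ℝ) ^ β / (m : ℝ) ^ γ) * B := by
        refine mul_le_mul_of_nonneg_right (mul_le_mul_of_nonneg_left ?_ hd) hB
        exact rpow_div_rpow_le_of_le (Nat.cast_pos.2 hm) (Nat.cast_le.2 hmτ) hβγ
    _ = d * (m : ℝ) ^ β / (m : ℝ) ^ γ * B := by ring

theorem Finset.integrable_sup' {Ω ι : Type*} {m0 : MeasurableSpace Ω} {μ : Measure Ω}
    {s : Finset ι} (hs : s.Nonempty) {f : ι → Ω → ℝ} (hf : ∀ i ∈ s, Integrable (f i) μ) :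
    Integrable (fun x => s.sup' hs fun i => f i x) μ := by
  simpa only [← Finset.sup'_apply] using
    Finset.sup'_induction hs f (p := fun g => Integrable g μ)
      (fun _ hg _ hh => hg.sup hh) hf

section Exceed

variable {Ω : Type*}

/-- `{τ ≤ k}`, where `τ` is the first `n ≥ m` with `lam < ∑ j ∈ Ico m n, G j`. -/
def exceedSet (G : ℕ → Ω → ℝ) (m : ℕ) (lam : ℝ) (k : ℕ) : Set Ω :=
  {x | ∃ n ∈ Icc m k, lam < ∑ j ∈ Ico m n, G j x}

variable {G : ℕ → Ω → ℝ} {m N : ℕ} {lam : ℝ}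

theorem setOf_lt_sup'_eq_exceedSet (hmN : m ≤ N) :
    {x | lam < (Icc m N).sup' (nonempty_Icc.2 hmN) fun n => ∑ j ∈ Ico m n, G j x} =
      exceedSet G m lam N := by
  ext x
  simp only [Set.mem_ofPred_eq, lt_sup'_iff]
  rfl

theorem exceedSet_mono : Monotone (exceedSet G m lam) :=
  fun _ _ hkl _ ⟨n, hn, hlt⟩ => ⟨n, Icc_subset_Icc_right hkl hn, hlt⟩

theorem exists_first_passage {x : Ω} (hx : x ∈ exceedSet G m lam N) :
    ∃ τ, m ≤ τ ∧ lam < ∑ j ∈ Ico m τ, G j x ∧ ∀ k, x ∈ exceedSet G m lam k ↔ τ ≤ k := by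
  classical
  have h : ∃ n, m ≤ n ∧ lam < ∑ j ∈ Ico m n, G j x :=
    let ⟨n, hn, hlt⟩ := hx; ⟨n, (mem_Icc.1 hn).1, hlt⟩
  obtain ⟨hmτ, hτ⟩ := Nat.find_spec h
  refine ⟨Nat.find h, hmτ, hτ, fun k => ⟨?_, fun hk => ⟨_, mem_Icc.2 ⟨hmτ, hk⟩, hτ⟩⟩⟩
  rintro ⟨n, hn, hlt⟩
  exact (Nat.find_min' h ⟨(mem_Icc.1 hn).1, hlt⟩).trans (mem_Icc.1 hn).2

theorem le_sum_sub_sum_indicator_exceedSet {x : Ω} (hx : x ∈ exceedSet G m lam N) :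
    lam ≤ ∑ j ∈ Ico m N, G j x - ∑ j ∈ Ico m N, (exceedSet G m lam j).indicator (G j) x := by
  classical
  obtain ⟨τ, hmτ, hτ, hmem⟩ := exists_first_passage hx
  have hstopped : ∑ j ∈ Ico m N, (exceedSet G m lam j).indicator (G j) x =
      ∑ j ∈ Ico τ N, G j x := by
    simp only [Set.indicator_apply, hmem, ← sum_filter, Ico_filter_le, max_eq_right hmτ]
  rw [hstopped, ← sum_Ico_consecutive _ hmτ ((hmem N).1 hx), add_sub_cancel_right]
  exact hτ.le

theorem measurableSet_exceedSet {m0 : MeasurableSpace Ω} {ℱ : Filtration ℕ m0}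
    (hG : Adapted ℱ G) (k : ℕ) : MeasurableSet[ℱ k] (exceedSet G m lam k) := by
  have hunion : exceedSet G m lam k = ⋃ n ∈ Icc m k, {x | lam < ∑ j ∈ Ico m n, G j x} := by
    ext; simp [exceedSet]
  rw [hunion]
  refine measurableSet_biUnion _ fun n hn => measurableSet_lt measurable_const ?_
  refine Finset.measurable_fun_sum _ fun j hj => hG.measurable_le ?_
  have := (mem_Icc.1 hn).2
  have := (mem_Ico.1 hj).2
  omega

theorem sum_indicator_exceedSet_sdiff_floor_le {c d β γ : ℝ} {B : Ω → ℝ} {x : Ω} (hm : 0 < m)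
    (hγ : 0 ≤ γ) (hβγ : β ≤ γ) (hd : 0 ≤ d) (hB : 0 ≤ B x)
    (hG : ∀ j ∈ Ico m N, |G j x| ≤ B x / (j : ℝ) ^ γ)
    (hcard : ∀ n : ℕ, 1 ≤ n →
      (({j : ℕ | n ≤ j ∧ (j : ℝ) - c * Real.log j ≤ (n : ℝ)}.ncard : ℝ)) ≤ d * (n : ℝ) ^ β) :
    ∑ j ∈ Ico m N, (exceedSet G m lam j \ exceedSet G m lam ⌊(j : ℝ) - c * Real.log j⌋₊).indicator
        (fun y => |G j y|) x ≤
      (exceedSet G m lam N).indicator (fun y => d * (m : ℝ) ^ β / (m : ℝ) ^ γ * B y) x := by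
  classical
  by_cases hx : x ∈ exceedSet G m lam N
  swap
  · rw [Set.indicator_of_notMem hx]
    refine (sum_eq_zero fun j hj => Set.indicator_of_notMem ?_ _).le
    exact fun hj' => hx (exceedSet_mono (mem_Ico.1 hj).2.le hj'.1)
  rw [Set.indicator_of_mem hx]
  obtain ⟨τ, hmτ, -, hmem⟩ := exists_first_passage hx
  have hτ : (0 : ℝ) < τ := by exact_mod_cast hm.trans_le hmτ
  calc ∑ j ∈ Ico m N, (exceedSet G m lam j \
          exceedSet G m lam ⌊(j : ℝ) - c * Real.log j⌋₊).indicator (fun y => |G j y|) x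
      = ∑ j ∈ Ico m N with τ ≤ j ∧ ⌊(j : ℝ) - c * Real.log j⌋₊ < τ, |G j x| := by
        rw [sum_filter]
        refine sum_congr rfl fun j _ => ?_
        simp only [Set.indicator_apply, Set.mem_sdiff, hmem, not_le]
    _ ≤ d * (m : ℝ) ^ β / (m : ℝ) ^ γ * B x := by
        refine sum_le_of_forall_mem_window hm hmτ hβγ hd hB (fun j hj => ?_) (fun j hj => ?_)
          (hcard τ (hm.trans_le hmτ))
        · obtain ⟨-, hτj, hfloor⟩ := mem_filter.1 hj
          refine ⟨hτj, (Nat.lt_floor_add_one _).le.trans ?_⟩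
          exact_mod_cast hfloor
        · obtain ⟨hj, hτj, -⟩ := mem_filter.1 hj
          refine (hG j hj).trans ?_
          gcongr

variable {m0 : MeasurableSpace Ω} {μ : Measure Ω}

theorem integral_sum_indicator_exceedSet_sdiff_floor_le {c d β γ : ℝ} {C : Ω → ℝ}
    (hG : ∀ j, Integrable (G j) μ) (hE : ∀ k, MeasurableSet (exceedSet G m lam k)) (hm : 0 < m)
    (hγ : 0 ≤ γ) (hβγ : β ≤ γ) (hd : 0 ≤ d) (hC : Integrable C μ) (hC0 : ∀ x, 0 ≤ C x)
    (hGC : ∀ᵐ x ∂μ, ∀ j ∈ Ico m N, |G j x| ≤ C x / (j : ℝ) ^ γ)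
    (hcard : ∀ n : ℕ, 1 ≤ n →
      (({j : ℕ | n ≤ j ∧ (j : ℝ) - c * Real.log j ≤ (n : ℝ)}.ncard : ℝ)) ≤ d * (n : ℝ) ^ β) :
    ∫ x, ∑ j ∈ Ico m N, (exceedSet G m lam j \
        exceedSet G m lam ⌊(j : ℝ) - c * Real.log j⌋₊).indicator (fun y => |G j y|) x ∂μ ≤
      d * (m : ℝ) ^ β / (m : ℝ) ^ γ * ∫ x in exceedSet G m lam N, C x ∂μ := by
  rw [← integral_const_mul, ← integral_indicator (hE N)]
  refine integral_mono_ae (integrable_finsetSum _ fun j _ =>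
      (hG j).abs.indicator ((hE j).diff (hE _))) ((hC.const_mul _).indicator (hE N)) ?_
  filter_upwards [hGC] with x hx
  exact sum_indicator_exceedSet_sdiff_floor_le hm hγ hβγ hd (hC0 x) hx hcard

variable [IsFiniteMeasure μ]

theorem mul_measureReal_exceedSet_le_setIntegral_sub (hG : ∀ j, Integrable (G j) μ)
    (hE : ∀ k, MeasurableSet (exceedSet G m lam k)) :
    lam * μ.real (exceedSet G m lam N) ≤
      ∫ x in exceedSet G m lam N, ∑ j ∈ Ico m N, G j x ∂μ -
        ∑ j ∈ Ico m N, ∫ x in exceedSet G m lam j, G j x ∂μ := by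
  set A := exceedSet G m lam N
  have hsum : Integrable (fun x => ∑ j ∈ Ico m N, G j x) μ := integrable_finsetSum _ fun j _ => hG j
  have hind : ∀ j ∈ Ico m N, Integrable ((exceedSet G m lam j).indicator (G j)) μ :=
    fun j _ => (hG j).indicator (hE j)
  calc lam * μ.real A = ∫ _ in A, lam ∂μ := by rw [setIntegral_const, smul_eq_mul, mul_comm]
    _ ≤ ∫ x in A, (∑ j ∈ Ico m N, G j x -
          ∑ j ∈ Ico m N, (exceedSet G m lam j).indicator (G j) x) ∂μ :=
        setIntegral_mono_on (integrableOn_const (measure_ne_top μ A))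
          (hsum.sub (integrable_finsetSum _ hind)).integrableOn (hE N)
          fun x hx => le_sum_sub_sum_indicator_exceedSet hx
    _ = _ := by
        rw [integral_sub hsum.integrableOn (integrable_finsetSum _ hind).integrableOn,
          integral_finsetSum _ fun j hj => (hind j hj).integrableOn]
        congr 1
        refine sum_congr rfl fun j hj => ?_
        rw [setIntegral_indicator (hE j), Set.inter_eq_self_of_subset_right
          (exceedSet_mono (mem_Ico.1 hj).2.le)]

theorem mul_measureReal_exceedSet_le (hG : ∀ j, Integrable (G j) μ)
    (hE : ∀ k, MeasurableSet (exceedSet G m lam k)) {k : ℕ → ℕ} (hk : ∀ j, k j ≤ j) :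
    lam * μ.real (exceedSet G m lam N) ≤
      ∫ x in exceedSet G m lam N, |∑ j ∈ Ico m N, G j x| ∂μ +
        ∑ j ∈ Ico m N, |∫ x in exceedSet G m lam (k j), G j x ∂μ| +
        ∫ x, ∑ j ∈ Ico m N,
          (exceedSet G m lam j \ exceedSet G m lam (k j)).indicator (fun y => |G j y|) x ∂μ := by
  have key := mul_measureReal_exceedSet_le_setIntegral_sub (N := N) hG hE
  set E := exceedSet G m lam
  have hsplit : ∀ j, ∫ x in E j, G j x ∂μ =
      ∫ x in E (k j), G j x ∂μ + ∫ x in E j \ E (k j), G j x ∂μ := fun j => by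
    rw [← setIntegral_union Set.disjoint_sdiff_right ((hE j).diff (hE (k j)))
      (hG j).integrableOn (hG j).integrableOn, Set.union_sdiff_cancel (exceedSet_mono (hk j))]
  have hsum : Integrable (fun x => ∑ j ∈ Ico m N, G j x) μ :=
    integrable_finsetSum _ fun j _ => hG j
  have hfirst : ∫ x in E N, ∑ j ∈ Ico m N, G j x ∂μ ≤ ∫ x in E N, |∑ j ∈ Ico m N, G j x| ∂μ :=
    setIntegral_mono hsum.integrableOn hsum.abs.integrableOn fun x => le_abs_self _
  have hcenter : -∑ j ∈ Ico m N, ∫ x in E (k j), G j x ∂μ ≤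
      ∑ j ∈ Ico m N, |∫ x in E (k j), G j x ∂μ| :=
    (neg_le_abs _).trans (abs_sum_le_sum_abs _ _)
  have hgap : -∑ j ∈ Ico m N, ∫ x in E j \ E (k j), G j x ∂μ ≤
      ∫ x, ∑ j ∈ Ico m N, (E j \ E (k j)).indicator (fun y => |G j y|) x ∂μ := by
    rw [integral_finsetSum _ fun j _ => (hG j).abs.indicator ((hE j).diff (hE (k j))),
      ← sum_neg_distrib]
    refine sum_le_sum fun j _ => ?_
    rw [integral_indicator ((hE j).diff (hE (k j)))]
    exact (neg_le_abs _).trans abs_integral_le_integral_abs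
  simp only [hsplit, sum_add_distrib] at key
  linarith

end Exceed

section CondExp

variable {Ω : Type*} {m m0 : MeasurableSpace Ω} {μ : Measure Ω} [IsFiniteMeasure μ]

theorem abs_integral_mul_le_of_abs_condExp_le (hm : m ≤ m0) {f g : Ω → ℝ} {ε : ℝ}
    (hf : StronglyMeasurable[m] f) (hf_int : Integrable f μ) (hg : Integrable g μ)
    (hfg : Integrable (f * g) μ) (hε : ∀ᵐ x ∂μ, |μ[g|m] x| ≤ ε) :
    |∫ x, f x * g x ∂μ| ≤ ε * ∫ x, |f x| ∂μ := by
  have hpull : μ[f * g|m] =ᵐ[μ] f * μ[g|m] := condExp_mul_of_stronglyMeasurable_left hf hfg hg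
  calc |∫ x, f x * g x ∂μ| = |∫ x, μ[f * g|m] x ∂μ| := by rw [integral_condExp hm]; rfl
    _ = |∫ x, f x * μ[g|m] x ∂μ| := by rw [integral_congr_ae hpull]; rfl
    _ ≤ ∫ x, |f x| * |μ[g|m] x| ∂μ := by
        simpa only [Pi.mul_apply, abs_mul] using
          abs_integral_le_integral_abs (μ := μ) (f := f * μ[g|m])
    _ ≤ ∫ x, |f x| * ε ∂μ := by
        refine integral_mono_ae ?_ (hf_int.abs.mul_const ε) ?_
        · simpa only [Pi.mul_apply, abs_mul] using (integrable_condExp.congr hpull).abs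
        · filter_upwards [hε] with x hx using mul_le_mul_of_nonneg_left hx (abs_nonneg _)
    _ = ε * ∫ x, |f x| ∂μ := by rw [integral_mul_const, mul_comm]

theorem abs_setIntegral_mul_le_of_abs_condExp_le (hm : m ≤ m0) {s : Set Ω} {b w B : Ω → ℝ}
    {ε : ℝ} (hs : MeasurableSet[m] s) (hb : StronglyMeasurable[m] b) (hB : Integrable B μ)
    (hbB : ∀ᵐ x ∂μ, |b x| ≤ B x) (hw : AEStronglyMeasurable w μ) (hw1 : ∀ᵐ x ∂μ, |w x| ≤ 1)
    (hε0 : 0 ≤ ε) (hε : ∀ᵐ x ∂μ, |μ[w|m] x| ≤ ε) :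
    |∫ x in s, b x * w x ∂μ| ≤ ε * ∫ x in s, B x ∂μ := by
  have hsb : StronglyMeasurable[m] (s.indicator b) := hb.indicator hs
  have hsbB : ∀ᵐ x ∂μ, ‖s.indicator b x‖ ≤ B x := by
    filter_upwards [hbB] with x hx
    by_cases hxs : x ∈ s
    · simpa [hxs] using hx
    · simpa [hxs] using (abs_nonneg _).trans hx
  have hsb_int : Integrable (s.indicator b) μ :=
    hB.mono' (hsb.mono hm).aestronglyMeasurable hsbB
  have hw_int : Integrable w μ :=
    (integrable_const (1 : ℝ)).mono' hw (by simpa only [Real.norm_eq_abs] using hw1)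
  have hsbw : Integrable (s.indicator b * w) μ :=
    hsb_int.mul_bdd hw (c := 1) (by simpa only [Real.norm_eq_abs] using hw1)
  have hmeas : MeasurableSet s := hm s hs
  calc |∫ x in s, b x * w x ∂μ| = |∫ x, s.indicator b x * w x ∂μ| := by
        rw [← integral_indicator hmeas]
        congr 2 with x
        by_cases hxs : x ∈ s <;> simp [hxs]
    _ ≤ ε * ∫ x, |s.indicator b x| ∂μ :=
        abs_integral_mul_le_of_abs_condExp_le hm hsb hsb_int hw_int hsbw hε
    _ ≤ ε * ∫ x in s, B x ∂μ := by
        gcongr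
        rw [← integral_indicator hmeas]
        refine integral_mono_ae hsb_int.abs (hB.indicator hmeas) ?_
        filter_upwards [hsbB] with x hx
        by_cases hxs : x ∈ s
        · simpa [hxs] using hx
        · simp [hxs]

theorem abs_setIntegral_mul_div_rpow_le (hm : m ≤ m0) {s t : Set Ω} {b w B : Ω → ℝ}
    {ρ c α η x y : ℝ} (hρ : 0 ≤ ρ) (hx : 0 < x) (hy : c * Real.log x ≤ y)
    (hs : MeasurableSet[m] s) (hst : s ⊆ t) (ht : MeasurableSet[m0] t)
    (hb : StronglyMeasurable[m] b) (hB : Integrable B μ) (hB0 : ∀ z, 0 ≤ B z)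
    (hbB : ∀ᵐ z ∂μ, |b z| ≤ B z * x ^ η) (hw : AEStronglyMeasurable w μ)
    (hw1 : ∀ᵐ z ∂μ, |w z| ≤ 1) (hε : ∀ᵐ z ∂μ, |μ[w|m] z| ≤ Real.exp (-ρ * y)) :
    |∫ z in s, b z * w z / x ^ α ∂μ| ≤ 1 / x ^ (c * ρ + α - η) * ∫ z in t, B z ∂μ := by
  have hxα : 0 < x ^ α := Real.rpow_pos_of_pos hx α
  have hdecor : |∫ z in s, b z * w z ∂μ| ≤ Real.exp (-ρ * y) * ((∫ z in t, B z ∂μ) * x ^ η) := by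
    refine (abs_setIntegral_mul_le_of_abs_condExp_le hm hs hb (hB.mul_const _) hbB hw hw1
      (Real.exp_nonneg _) hε).trans ?_
    rw [integral_mul_const]
    refine mul_le_mul_of_nonneg_left (mul_le_mul_of_nonneg_right ?_ (Real.rpow_nonneg hx.le η))
      (Real.exp_nonneg _)
    exact setIntegral_mono_set hB.integrableOn (Eventually.of_forall hB0) hst.eventuallyLE
  calc |∫ z in s, b z * w z / x ^ α ∂μ| = |∫ z in s, b z * w z ∂μ| / x ^ α := by
        rw [integral_div, abs_div, abs_of_pos hxα]
    _ ≤ 1 / x ^ (c * ρ) * ((∫ z in t, B z ∂μ) * x ^ η) / x ^ α := by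
        gcongr
        refine hdecor.trans (mul_le_mul_of_nonneg_right (exp_neg_mul_le_one_div_rpow hρ hx hy) ?_)
        exact mul_nonneg (setIntegral_nonneg ht fun z _ => hB0 z) (Real.rpow_nonneg hx.le η)
    _ = 1 / x ^ (c * ρ + α - η) * ∫ z in t, B z ∂μ := by
        rw [Real.rpow_sub hx, Real.rpow_add hx]
        field_simp

end CondExp

theorem floor_sub_mul_log_le_self {c : ℝ} (hc : 0 ≤ c) (j : ℕ) :
    ⌊(j : ℝ) - c * Real.log j⌋₊ ≤ j :=
  Nat.floor_le_of_le (sub_le_self _ (mul_nonneg hc (Real.log_natCast_nonneg j)))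

section WeightedSums

variable {Ω : Type*} {m0 : MeasurableSpace Ω} {μ : Measure Ω} {ℱ : Filtration ℕ m0}
  {w b : ℕ → Ω → ℝ} {α c : ℝ}

theorem adapted_mul_div_rpow (hw : Adapted ℱ w) (hc : 0 ≤ c)
    (hb : ∀ j : ℕ, StronglyMeasurable[ℱ ⌊(j : ℝ) - c * Real.log j⌋₊] (b j)) :
    Adapted ℱ fun j x => b j x * w j x / (j : ℝ) ^ α := fun j =>
  (((hb j).mono (ℱ.mono (floor_sub_mul_log_le_self hc j))).measurable.mul (hw j)).div_const _

theorem sum_abs_setIntegral_exceedSet_floor_le [IsFiniteMeasure μ] {ρ η lam : ℝ} {m N : ℕ}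
    {C : Ω → ℝ} (hw : Adapted ℱ w) (hw1 : ∀ j, ∀ᵐ x ∂μ, |w j x| ≤ 1) (hρ : 0 ≤ ρ)
    (hcorr : ∀ k j : ℕ, k < j →
      ∀ᵐ x ∂μ, |(μ[w j | ℱ k]) x| ≤ Real.exp (-ρ * ((j : ℝ) - (k : ℝ))))
    (hc : 0 < c) (hm : 2 ≤ m) (hfloor : ∀ j : ℕ, m ≤ j → 0 ≤ (j : ℝ) - c * Real.log j)
    (hb : ∀ j : ℕ, StronglyMeasurable[ℱ ⌊(j : ℝ) - c * Real.log j⌋₊] (b j))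
    (hC : Integrable C μ) (hC0 : ∀ x, 0 ≤ C x)
    (hbC : ∀ᵐ x ∂μ, ∀ j ∈ Ico m N, |b j x| ≤ C x * (j : ℝ) ^ η) :
    ∑ j ∈ Ico m N, |∫ x in exceedSet (fun j x => b j x * w j x / (j : ℝ) ^ α) m lam
        ⌊(j : ℝ) - c * Real.log j⌋₊, b j x * w j x / (j : ℝ) ^ α ∂μ| ≤
      (∑ j ∈ Ico m N, 1 / (j : ℝ) ^ (c * ρ + α - η)) *
        ∫ x in exceedSet (fun j x => b j x * w j x / (j : ℝ) ^ α) m lam N, C x ∂μ := by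
  have hE := measurableSet_exceedSet (m := m) (lam := lam)
    (adapted_mul_div_rpow (α := α) hw hc.le hb)
  rw [sum_mul]
  refine sum_le_sum fun j hj => ?_
  obtain ⟨hmj, hjN⟩ := mem_Ico.1 hj
  have hj1 : (1 : ℝ) < j := by exact_mod_cast (by omega : 1 < j)
  have hkj : (⌊(j : ℝ) - c * Real.log j⌋₊ : ℝ) ≤ j - c * Real.log j := Nat.floor_le (hfloor j hmj)
  have hkj_lt : ⌊(j : ℝ) - c * Real.log j⌋₊ < j := by
    have := mul_pos hc (Real.log_pos hj1)
    exact_mod_cast hkj.trans_lt (sub_lt_self _ this)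
  exact abs_setIntegral_mul_div_rpow_le (ℱ.le _) hρ (by linarith) (by linarith) (hE _)
    (exceedSet_mono (hkj_lt.le.trans hjN.le)) (ℱ.le N _ (hE N)) (hb j) hC hC0
    (by filter_upwards [hbC] with x hx using hx j hj) hw.measurable.aestronglyMeasurable (hw1 j)
    (hcorr _ j hkj_lt)

end WeightedSums

theorem stmt_18_general {Ω : Type*} {m0 : MeasurableSpace Ω} (μ : Measure Ω) [IsProbabilityMeasure μ]
    (ℱ : Filtration ℕ m0) (w : ℕ → Ω → ℝ)
    (hadapted : Adapted ℱ w)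
    (hwbdd : ∀ j, ∀ᵐ x ∂μ, |w j x| ≤ 1)
    (ρ : ℝ) (hρ : 0 < ρ)
    (hcorr : ∀ k j : ℕ, k < j →
      ∀ᵐ x ∂μ, |(μ[w j | ℱ k]) x| ≤ Real.exp (-ρ * ((j : ℝ) - (k : ℝ))))
    (α c η : ℝ) (hc : 0 < c)
    (m N : ℕ) (hm : 2 ≤ m) (hmN : m ≤ N)
    (hfloor : ∀ j : ℕ, m ≤ j → (1 : ℝ) ≤ (j : ℝ) - c * Real.log j)
    (b cc : ℕ → Ω → ℝ)
    (hb : ∀ j : ℕ, StronglyMeasurable[ℱ ⌊(j : ℝ) - c * Real.log j⌋₊] (b j))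
    (hccpos : ∀ j x, 0 ≤ cc j x)
    (hccint : ∀ j, Integrable (cc j) μ)
    (hbcc : ∀ j, ∀ᵐ x ∂μ, |b j x| ≤ cc j x * (j : ℝ) ^ η)
    (β d : ℝ) (hβ0 : 0 < β) (hβ : β < α - η) (hd : 0 < d)
    (hcard : ∀ n : ℕ, 1 ≤ n →
      (({j : ℕ | n ≤ j ∧ (j : ℝ) - c * Real.log j ≤ (n : ℝ)}.ncard : ℝ)) ≤ d * (n : ℝ) ^ β)
    (lam : ℝ) :
    lam * (μ {x | lam < Finset.sup' (Finset.Icc m N) (Finset.nonempty_Icc.mpr hmN)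
        fun n => ∑ j ∈ Finset.Ico m n, b j x * w j x / (j : ℝ) ^ α}).toReal ≤
      ∫ x in {x | lam < Finset.sup' (Finset.Icc m N) (Finset.nonempty_Icc.mpr hmN)
          fun n => ∑ j ∈ Finset.Ico m n, b j x * w j x / (j : ℝ) ^ α},
        (|∑ j ∈ Finset.Ico m N, b j x * w j x / (j : ℝ) ^ α| +
          ((∑ j ∈ Finset.Ico m N, 1 / (j : ℝ) ^ (c * ρ + α - η)) +
              d * (m : ℝ) ^ β / (m : ℝ) ^ (α - η)) *
            (Finset.sup' (Finset.Icc m N) (Finset.nonempty_Icc.mpr hmN) fun j => cc j x)) ∂μ := by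
  set G : ℕ → Ω → ℝ := fun j x => b j x * w j x / (j : ℝ) ^ α
  set C : Ω → ℝ := fun x => (Icc m N).sup' (nonempty_Icc.2 hmN) fun j => cc j x
  have hGad : Adapted ℱ G := adapted_mul_div_rpow hadapted hc.le hb
  have hE : ∀ n, MeasurableSet (exceedSet G m lam n) :=
    fun n => ℱ.le n _ (measurableSet_exceedSet hGad n)
  have hGint : ∀ j, Integrable (G j) μ := fun j =>
    (((hccint j).mul_const _).div_const _).mono' hGad.measurable.aestronglyMeasurable <| by
      filter_upwards [hbcc j, hwbdd j] with x hbx hwx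
      exact abs_mul_div_le hbx hwx (Real.rpow_nonneg (Nat.cast_nonneg j) α)
  have hCint : Integrable C μ := Finset.integrable_sup' _ fun j _ => hccint j
  have hC0 : ∀ x, 0 ≤ C x := fun x =>
    (hccpos m x).trans (le_sup' (fun j => cc j x) (left_mem_Icc.2 hmN))
  have hbC : ∀ᵐ x ∂μ, ∀ j ∈ Ico m N, |b j x| ≤ C x * (j : ℝ) ^ η := by
    filter_upwards [ae_all_iff.2 hbcc] with x hx j hj
    exact (hx j).trans (mul_le_mul_of_nonneg_right (le_sup' (fun j => cc j x)
      (Ico_subset_Icc_self hj)) (Real.rpow_nonneg (Nat.cast_nonneg j) η))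
  have hGC : ∀ᵐ x ∂μ, ∀ j ∈ Ico m N, |G j x| ≤ C x / (j : ℝ) ^ (α - η) := by
    filter_upwards [hbC, ae_all_iff.2 hwbdd] with x hbx hwx j hj
    have hj0 : (0 : ℝ) < j := by exact_mod_cast (by grind : 0 < j)
    exact abs_mul_div_rpow_le (hbx j hj) (hwx j) hj0
  rw [setOf_lt_sup'_eq_exceedSet hmN]
  calc lam * (μ (exceedSet G m lam N)).toReal ≤ _ :=
        mul_measureReal_exceedSet_le hGint hE (floor_sub_mul_log_le_self hc.le)
    _ ≤ ∫ x in exceedSet G m lam N, |∑ j ∈ Ico m N, G j x| ∂μ +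
          (∑ j ∈ Ico m N, 1 / (j : ℝ) ^ (c * ρ + α - η)) * ∫ x in exceedSet G m lam N, C x ∂μ +
          d * (m : ℝ) ^ β / (m : ℝ) ^ (α - η) * ∫ x in exceedSet G m lam N, C x ∂μ :=
        add_le_add (add_le_add le_rfl (sum_abs_setIntegral_exceedSet_floor_le hadapted hwbdd hρ.le
          hcorr hc hm (fun j hj => zero_le_one.trans (hfloor j hj)) hb hCint hC0 hbC))
          (integral_sum_indicator_exceedSet_sdiff_floor_le hGint hE (by omega) (hβ0.trans hβ).le
            hβ.le hd.le hCint hC0 hGC hcard)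
    _ = _ := by
      rw [integral_add (integrable_finsetSum _ fun j _ => hGint j).abs.integrableOn
        (hCint.const_mul _).integrableOn, integral_const_mul]
      ring

/-- Weak-type maximal inequality:
`λ P( max_{m ≤ n ≤ N} J^{(m,n)} > λ ) ≤ E[(|J^{(m,N)}| + D) 1_A]`, where
`A = { max_{m ≤ n ≤ N} J^{(m,n)} > λ }` and
`D = (∑_{j=m}^{N-1} j^{-(cρ+α-η)} + d m^β / m^{α-η}) sup_{m ≤ j ≤ N} c_j`. -/
theorem stmt_18 {Ω : Type*} {m0 : MeasurableSpace Ω} (μ : Measure Ω) [IsProbabilityMeasure μ]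
    (ℱ : Filtration ℕ m0) (w : ℕ → Ω → ℝ)
    (hadapted : Adapted ℱ w)
    (hwbdd : ∀ j, ∀ᵐ x ∂μ, |w j x| ≤ 1)
    (ρ : ℝ) (hρ : 0 < ρ)
    (hcorr : ∀ k j : ℕ, k < j →
      ∀ᵐ x ∂μ, |(μ[w j | ℱ k]) x| ≤ Real.exp (-ρ * ((j : ℝ) - (k : ℝ))))
    (α c η : ℝ) (hα : 1 / 2 < α) (hc : 0 < c) (hη : 0 ≤ η)
    (m N : ℕ) (hm : 2 ≤ m) (hmN : m ≤ N)
    (hfloor : ∀ j : ℕ, m ≤ j → (1 : ℝ) ≤ (j : ℝ) - c * Real.log j)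
    (b cc : ℕ → Ω → ℝ)
    (hb : ∀ j : ℕ, StronglyMeasurable[ℱ ⌊(j : ℝ) - c * Real.log j⌋₊] (b j))
    (hccpos : ∀ j x, 0 ≤ cc j x)
    (hccint : ∀ j, Integrable (cc j) μ)
    (hbcc : ∀ j, ∀ᵐ x ∂μ, |b j x| ≤ cc j x * (j : ℝ) ^ η)
    (β d : ℝ) (hβ0 : 0 < β) (hβ : β < α - η) (hd : 0 < d)
    (hcard : ∀ n : ℕ, 1 ≤ n →
      (({j : ℕ | n ≤ j ∧ (j : ℝ) - c * Real.log j ≤ (n : ℝ)}.ncard : ℝ)) ≤ d * (n : ℝ) ^ β)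
    (lam : ℝ) (hlam : 0 < lam) :
    lam * (μ {x | lam < Finset.sup' (Finset.Icc m N) (Finset.nonempty_Icc.mpr hmN)
        fun n => ∑ j ∈ Finset.Ico m n, b j x * w j x / (j : ℝ) ^ α}).toReal ≤
      ∫ x in {x | lam < Finset.sup' (Finset.Icc m N) (Finset.nonempty_Icc.mpr hmN)
          fun n => ∑ j ∈ Finset.Ico m n, b j x * w j x / (j : ℝ) ^ α},
        (|∑ j ∈ Finset.Ico m N, b j x * w j x / (j : ℝ) ^ α| +
          ((∑ j ∈ Finset.Ico m N, 1 / (j : ℝ) ^ (c * ρ + α - η)) +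
              d * (m : ℝ) ^ β / (m : ℝ) ^ (α - η)) *
            (Finset.sup' (Finset.Icc m N) (Finset.nonempty_Icc.mpr hmN) fun j => cc j x)) ∂μ :=
  stmt_18_general μ ℱ w hadapted hwbdd ρ hρ hcorr α c η hc m N hm hmN hfloor b cc hb hccpos hccint
    hbcc β d hβ0 hβ hd hcard lam
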